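/- The internal information cost of a deterministic-turn, private-coin communication protocol is at most its communication complexity: I(X; Π | Y) + I(Y; Π | X) ≤ |Π|, where |Π| is the maximum number of bits transmitted. -/

import Mathlib

open scoped Classical
open Finset

/-- Shannon entropy (base 2) of a pmf on a finite type. -/
noncomputable def entH {α : Type*} [Fintype α] (p : α → ℝ) : ℝ :=
  -∑ x, p x * Real.logb 2 (p x)

/-- Kullback-Leibler divergence (base 2) between pmfs on a finite type. -/
noncomputable def klD {α : Type*} [Fintype α] (p q : α → ℝ) : ℝ :=
  ∑ x, p x * Real.logb 2 (p x / q x)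

/-- Distribution of a random variable `f` on a finite sample space with pmf `μ`. -/
noncomputable def distOf {Ω α : Type*} [Fintype Ω] [Fintype α] (μ : Ω → ℝ) (f : Ω → α) : α → ℝ :=
  fun x => ∑ ω, if f ω = x then μ ω else 0

/-- Entropy of a random variable. -/
noncomputable def rvH {Ω α : Type*} [Fintype Ω] [Fintype α] (μ : Ω → ℝ) (f : Ω → α) : ℝ :=
  entH (distOf μ f)

/-- Conditional entropy H(f | g). -/
noncomputable def condEnt {Ω α β : Type*} [Fintype Ω] [Fintype α] [Fintype β]
    (μ : Ω → ℝ) (f : Ω → α) (g : Ω → β) : ℝ :=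
  rvH μ (fun ω => (f ω, g ω)) - rvH μ g

/-- Conditional mutual information I(A ; B | C). -/
noncomputable def cMI {Ω α β γ : Type*} [Fintype Ω] [Fintype α] [Fintype β] [Fintype γ]
    (μ : Ω → ℝ) (A : Ω → α) (B : Ω → β) (C : Ω → γ) : ℝ :=
  condEnt μ A C - condEnt μ A (fun ω => (B ω, C ω))

/-!
By the chain rule, `I(X; Π | Y)` splits into the sum over rounds `i` of `I(X; Π_i | Y, Π_{<i})`,
and symmetrically for `I(Y; Π | X)`. In each round one of the two summands vanishes by the turn
hypothesis (mutual information being symmetric), and the other is at most `H(Π_i | ·) ≤ 1`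
because `Π_i` is a single bit. Summing over the `C` rounds gives the bound.
-/

lemma concaveOn_logb_two : ConcaveOn ℝ (Set.Ioi 0) (Real.logb 2) := by
  have hlogb : Real.logb 2 = (Real.log 2)⁻¹ • Real.log := by
    funext x; simp [Real.logb, div_eq_inv_mul]
  rw [hlogb]
  exact strictConcaveOn_log_Ioi.concaveOn.smul (by positivity)

section Entropy

variable {Ω α β γ δ : Type*} [Fintype Ω] [Fintype α] [Fintype β] [Fintype γ] [Fintype δ]
  {μ : Ω → ℝ}

lemma distOf_nonneg (hμ : ∀ ω, 0 ≤ μ ω) (f : Ω → α) (x : α) : 0 ≤ distOf μ f x :=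
  sum_nonneg fun ω _ => by split <;> simp [hμ ω]

lemma le_distOf (hμ : ∀ ω, 0 ≤ μ ω) (f : Ω → α) (ω : Ω) : μ ω ≤ distOf μ f (f ω) := by
  simpa [distOf] using single_le_sum (f := fun ω' => if f ω' = f ω then μ ω' else 0)
    (fun ω' _ => by split <;> simp [hμ ω']) (mem_univ ω)

lemma distOf_pos (hμ : ∀ ω, 0 ≤ μ ω) (f : Ω → α) {ω : Ω} (hω : μ ω ≠ 0) :
    0 < distOf μ f (f ω) :=
  (lt_of_le_of_ne (hμ ω) hω.symm).trans_le (le_distOf hμ f ω)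

lemma distOf_pair_le (hμ : ∀ ω, 0 ≤ μ ω) (f : Ω → α) (g : Ω → β) (a : α) (b : β) :
    distOf μ (fun ω => (f ω, g ω)) (a, b) ≤ distOf μ g b := by
  refine sum_le_sum fun ω _ => ?_
  by_cases h : (f ω, g ω) = (a, b)
  · rw [if_pos h, if_pos (congrArg Prod.snd h)]
  · rw [if_neg h]; split <;> simp [hμ ω]

lemma sum_mul_comp_eq_sum_distOf_mul (μ : Ω → ℝ) (f : Ω → α) (g : α → ℝ) :
    ∑ ω, μ ω * g (f ω) = ∑ x, distOf μ f x * g x := by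
  simp only [distOf, sum_mul, ite_mul, zero_mul]
  rw [sum_comm]
  simp

lemma sum_distOf (μ : Ω → ℝ) (f : Ω → α) : ∑ x, distOf μ f x = ∑ ω, μ ω := by
  simpa using (sum_mul_comp_eq_sum_distOf_mul μ f fun _ => 1).symm

lemma rvH_eq_sum (μ : Ω → ℝ) (f : Ω → α) :
    rvH μ f = -∑ ω, μ ω * Real.logb 2 (distOf μ f (f ω)) := by
  rw [rvH, entH, sum_mul_comp_eq_sum_distOf_mul μ f fun x => Real.logb 2 (distOf μ f x)]

lemma rvH_congr {f : Ω → α} {g : Ω → β} (h : ∀ ω ω', f ω = f ω' ↔ g ω = g ω') :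
    rvH μ f = rvH μ g := by
  have hdist : ∀ ω, distOf μ f (f ω) = distOf μ g (g ω) := fun ω =>
    sum_congr rfl fun ω' _ => by rw [h ω' ω]
  simp only [rvH_eq_sum, hdist]

lemma condEnt_congr_right (A : Ω → α) {Z : Ω → β} {Z' : Ω → γ}
    (h : ∀ ω ω', Z ω = Z ω' ↔ Z' ω = Z' ω') : condEnt μ A Z = condEnt μ A Z' := by
  rw [condEnt, condEnt, rvH_congr h,
    rvH_congr (f := fun ω => (A ω, Z ω)) (g := fun ω => (A ω, Z' ω))
      fun ω ω' => by simp only [Prod.mk.injEq, h ω ω']]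

lemma condEnt_eq_sum_mul_logb_div (hμ : ∀ ω, 0 ≤ μ ω) (B : Ω → α) (Z : Ω → β) :
    condEnt μ B Z = ∑ ω, μ ω *
      Real.logb 2 (distOf μ Z (Z ω) / distOf μ (fun ω => (B ω, Z ω)) (B ω, Z ω)) := by
  rw [condEnt, rvH_eq_sum, rvH_eq_sum, neg_sub_neg, ← sum_sub_distrib]
  refine sum_congr rfl fun ω _ => ?_
  by_cases hω : μ ω = 0
  · simp [hω]
  rw [Real.logb_div (distOf_pos hμ Z hω).ne' (distOf_pos hμ (fun ω => (B ω, Z ω)) hω).ne']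
  ring

lemma condEnt_nonneg (hμ : ∀ ω, 0 ≤ μ ω) (B : Ω → α) (Z : Ω → β) : 0 ≤ condEnt μ B Z := by
  rw [condEnt_eq_sum_mul_logb_div hμ]
  refine sum_nonneg fun ω _ => ?_
  by_cases hω : μ ω = 0
  · simp [hω]
  have hpair := distOf_pos hμ (fun ω => (B ω, Z ω)) hω
  exact mul_nonneg (hμ ω) (Real.logb_nonneg one_lt_two
    ((one_le_div hpair).2 (distOf_pair_le hμ B Z _ _)))

lemma sum_mul_distOf_div_distOf_pair_le (hμ : ∀ ω, 0 ≤ μ ω) (B : Ω → β) (Z : Ω → γ) :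
    ∑ ω, μ ω * (distOf μ Z (Z ω) / distOf μ (fun ω => (B ω, Z ω)) (B ω, Z ω)) ≤
      Fintype.card β * ∑ ω, μ ω := by
  set P : Ω → β × γ := fun ω => (B ω, Z ω)
  calc ∑ ω, μ ω * (distOf μ Z (P ω).2 / distOf μ P (P ω))
      = ∑ p, distOf μ P p * (distOf μ Z p.2 / distOf μ P p) :=
        sum_mul_comp_eq_sum_distOf_mul μ P fun p => distOf μ Z p.2 / distOf μ P p
    _ ≤ ∑ p : β × γ, distOf μ Z p.2 := sum_le_sum fun p _ => by
        rcases (distOf_nonneg hμ P p).eq_or_lt with h | h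
        · rw [← h, zero_mul]; exact distOf_nonneg hμ Z p.2
        · rw [mul_div_cancel₀ _ h.ne']
    _ = Fintype.card β * ∑ ω, μ ω := by
        simp [Fintype.sum_prod_type, sum_distOf]

lemma condEnt_le_logb_card (hμ : ∀ ω, 0 ≤ μ ω) (hs : ∑ ω, μ ω = 1) (B : Ω → β) (Z : Ω → γ) :
    condEnt μ B Z ≤ Real.logb 2 (Fintype.card β) := by
  set r : Ω → ℝ := fun ω => distOf μ Z (Z ω) / distOf μ (fun ω => (B ω, Z ω)) (B ω, Z ω)
  set S := univ.filter (μ · ≠ 0)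
  have hsupp : ∀ g : Ω → ℝ, ∑ ω ∈ S, μ ω * g ω = ∑ ω, μ ω * g ω := fun g =>
    sum_filter_of_ne fun ω _ h => left_ne_zero_of_mul h
  have hr : ∀ ω ∈ S, r ω ∈ Set.Ioi 0 := fun ω hω => by
    have hω : μ ω ≠ 0 := (mem_filter.1 hω).2
    exact div_pos (distOf_pos hμ Z hω) (distOf_pos hμ (fun ω => (B ω, Z ω)) hω)
  have hS : ∑ ω ∈ S, μ ω = 1 := by simpa [hs] using hsupp 1
  have hpos : 0 < ∑ ω ∈ S, μ ω * r ω := by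
    obtain ⟨ω, hω⟩ := nonempty_of_sum_ne_zero (hS.trans_ne one_ne_zero)
    exact sum_pos (fun ω hω => mul_pos ((hμ ω).lt_of_ne (mem_filter.1 hω).2.symm) (hr ω hω))
      ⟨ω, hω⟩
  calc condEnt μ B Z = ∑ ω ∈ S, μ ω • Real.logb 2 (r ω) := by
        rw [condEnt_eq_sum_mul_logb_div hμ]; exact (hsupp _).symm
    _ ≤ Real.logb 2 (∑ ω ∈ S, μ ω • r ω) :=
        concaveOn_logb_two.le_map_sum (fun ω _ => hμ ω) hS hr
    _ ≤ Real.logb 2 (Fintype.card β) := by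
        refine Real.logb_le_logb_of_le one_lt_two hpos ?_
        simpa [hsupp, hs] using sum_mul_distOf_div_distOf_pair_le hμ B Z

lemma cMI_comm (μ : Ω → ℝ) (A : Ω → α) (B : Ω → β) (Z : Ω → γ) :
    cMI μ A B Z = cMI μ B A Z := by
  have hswap : rvH μ (fun ω => (A ω, (B ω, Z ω))) = rvH μ (fun ω => (B ω, (A ω, Z ω))) :=
    rvH_congr fun ω ω' => by simp only [Prod.mk.injEq]; tauto
  simp only [cMI, condEnt, hswap]
  ring

lemma cMI_congr_right (A : Ω → α) (B : Ω → β) {Z : Ω → γ} {Z' : Ω → δ}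
    (h : ∀ ω ω', Z ω = Z ω' ↔ Z' ω = Z' ω') : cMI μ A B Z = cMI μ A B Z' := by
  rw [cMI, cMI, condEnt_congr_right A h,
    condEnt_congr_right A (Z := fun ω => (B ω, Z ω)) (Z' := fun ω => (B ω, Z' ω))
      fun ω ω' => by simp only [Prod.mk.injEq, h ω ω']]

lemma cMI_le_logb_card (hμ : ∀ ω, 0 ≤ μ ω) (hs : ∑ ω, μ ω = 1) (A : Ω → α) (B : Ω → β)
    (Z : Ω → γ) : cMI μ A B Z ≤ Real.logb 2 (Fintype.card β) := by
  rw [cMI_comm, cMI]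
  linarith [condEnt_nonneg hμ B (fun ω => (A ω, Z ω)), condEnt_le_logb_card hμ hs B Z]

lemma cMI_eq_condEnt_sub (A : Ω → α) (B : Ω → β) (Z : Ω → γ) {Z' : Ω → δ}
    (h : ∀ ω ω', (B ω, Z ω) = (B ω', Z ω') ↔ Z' ω = Z' ω') :
    cMI μ A B Z = condEnt μ A Z - condEnt μ A Z' := by
  rw [cMI, condEnt_congr_right A h]

lemma sum_cMI_eq_condEnt_sub {n : ℕ} (A : Ω → α) (B : Fin n → Ω → β) (Z : ℕ → Ω → γ)
    (h : ∀ (i : Fin n) ω ω', (B i ω, Z i ω) = (B i ω', Z i ω') ↔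
      Z (i.1 + 1) ω = Z (i.1 + 1) ω') :
    ∑ i, cMI μ A (B i) (Z i) = condEnt μ A (Z 0) - condEnt μ A (Z n) := by
  rw [sum_congr rfl fun i _ => cMI_eq_condEnt_sub A (B i) (Z i) (h i),
    Fin.sum_univ_eq_sum_range (fun i => condEnt μ A (Z i) - condEnt μ A (Z (i + 1))),
    sum_range_sub']

end Entropy

/-- The prefix of `t` of length `k`, padded with `none`: unlike `Fin k → β`, its type does not
depend on `k`, so the prefixes of all lengths can be telescoped. -/
def truncate {β : Type*} {C : ℕ} (k : ℕ) (t : Fin C → β) : Fin C → Option β :=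
  fun j => if j.1 < k then some (t j) else none

section Truncate

variable {β : Type*} {C : ℕ} {t t' : Fin C → β}

lemma truncate_eq_truncate_iff {k : ℕ} :
    truncate k t = truncate k t' ↔ ∀ j : Fin C, j.1 < k → t j = t' j := by
  simp only [funext_iff, truncate]
  refine forall_congr' fun j => ?_
  by_cases hj : j.1 < k <;> simp [hj]

lemma truncate_zero_eq : truncate 0 t = truncate 0 t' := by
  simp [truncate_eq_truncate_iff]

lemma truncate_card_eq_iff : truncate C t = truncate C t' ↔ t = t' := by
  rw [truncate_eq_truncate_iff, funext_iff]
  exact forall_congr' fun j => imp_iff_right j.2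

lemma truncate_succ_eq_iff (i : Fin C) :
    truncate (i.1 + 1) t = truncate (i.1 + 1) t' ↔ t i = t' i ∧ truncate i t = truncate i t' := by
  simp only [truncate_eq_truncate_iff, Nat.lt_succ_iff_lt_or_eq, or_imp, forall_and,
    Fin.val_inj, forall_eq]
  exact and_comm

lemma prefix_eq_prefix_iff (i : Fin C) :
    (fun j : Fin i.1 => t ⟨j.1, j.2.trans i.2⟩) = (fun j : Fin i.1 => t' ⟨j.1, j.2.trans i.2⟩) ↔
      truncate i t = truncate i t' :=
  funext_iff.trans ⟨fun h (j : Fin C) hj => h ⟨j.1, hj⟩, fun h j => h _ j.2⟩ |>.trans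
    truncate_eq_truncate_iff.symm

end Truncate

section Protocol

variable {Ω α β γ ε : Type*} [Fintype Ω] [Fintype α] [Fintype β] [Fintype γ] [Fintype ε]
  {μ : Ω → ℝ} {C : ℕ}

theorem cMI_eq_sum_cMI_truncate (A : Ω → α) (T : Ω → Fin C → ε) (Z : Ω → γ) :
    cMI μ A T Z = ∑ i : Fin C, cMI μ A (fun ω => T ω i) (fun ω => (Z ω, truncate i (T ω))) := by
  rw [sum_cMI_eq_condEnt_sub A _ (fun k ω => (Z ω, truncate k (T ω))), cMI,
    condEnt_congr_right A (Z := Z) (Z' := fun ω => (Z ω, truncate 0 (T ω))),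
    condEnt_congr_right A (Z := fun ω => (T ω, Z ω)) (Z' := fun ω => (Z ω, truncate C (T ω)))]
  · simp only [Prod.mk.injEq, truncate_card_eq_iff, and_comm, implies_true]
  · intro ω ω'
    rw [Prod.mk.injEq, and_iff_left truncate_zero_eq]
  · intro i ω ω'
    simp only [Prod.mk.injEq, truncate_succ_eq_iff]
    tauto

lemma cMI_prefix_eq_cMI_truncate (A : Ω → α) (B : Ω → β) (W : Ω → γ) (T : Ω → Fin C → ε)
    (i : Fin C) :
    cMI μ A B (fun ω => (W ω, fun j : Fin i.1 => T ω ⟨j.1, j.2.trans i.2⟩)) =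
      cMI μ A B (fun ω => (W ω, truncate i (T ω))) :=
  cMI_congr_right A B fun ω ω' => by simp only [Prod.mk.injEq, prefix_eq_prefix_iff]

lemma cMI_add_cMI_le_one (hμ : ∀ ω, 0 ≤ μ ω) (hs : ∑ ω, μ ω = 1) (X : Ω → α) (Y : Ω → β)
    (B : Ω → Bool) (P : Ω → γ)
    (hturn : cMI μ B Y (fun ω => (X ω, P ω)) = 0 ∨ cMI μ B X (fun ω => (Y ω, P ω)) = 0) :
    cMI μ X B (fun ω => (Y ω, P ω)) + cMI μ Y B (fun ω => (X ω, P ω)) ≤ 1 := by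
  have hbit : Real.logb 2 (Fintype.card Bool) = 1 := by simp
  rcases hturn with h | h
  · rw [cMI_comm μ Y, h]
    linarith [cMI_le_logb_card hμ hs X B (fun ω => (Y ω, P ω))]
  · rw [cMI_comm μ X, h]
    linarith [cMI_le_logb_card hμ hs Y B (fun ω => (X ω, P ω))]

end Protocol

/-- Internal information cost of a private-coin protocol is at most its communication:
if in each round, conditioned on the prefix, the transmitted bit reveals information to
only one of the parties, then I(X; Π | Y) + I(Y; Π | X) ≤ C. -/
theorem info_cost_le_communication {Ω 𝒳 𝒴 : Type*} [Fintype Ω] [Fintype 𝒳] [Fintype 𝒴]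
    (μ : Ω → ℝ) (hμ : ∀ ω, 0 ≤ μ ω) (hs : ∑ ω, μ ω = 1)
    {C : ℕ} (X : Ω → 𝒳) (Y : Ω → 𝒴) (T : Ω → (Fin C → Bool))
    (hturn : ∀ i : Fin C,
      cMI μ (fun ω => T ω i) Y
          (fun ω => (X ω, fun j : Fin i.1 => T ω ⟨j.1, j.2.trans i.2⟩)) = 0 ∨
      cMI μ (fun ω => T ω i) X
          (fun ω => (Y ω, fun j : Fin i.1 => T ω ⟨j.1, j.2.trans i.2⟩)) = 0) :
    cMI μ X T Y + cMI μ Y T X ≤ (C : ℝ) := by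
  have hround : ∀ i : Fin C,
      cMI μ X (fun ω => T ω i) (fun ω => (Y ω, truncate i (T ω))) +
        cMI μ Y (fun ω => T ω i) (fun ω => (X ω, truncate i (T ω))) ≤ 1 := fun i => by
    refine cMI_add_cMI_le_one hμ hs X Y _ _ ?_
    simpa only [cMI_prefix_eq_cMI_truncate] using hturn i
  calc cMI μ X T Y + cMI μ Y T X
      = ∑ i : Fin C, (cMI μ X (fun ω => T ω i) (fun ω => (Y ω, truncate i (T ω))) +
          cMI μ Y (fun ω => T ω i) (fun ω => (X ω, truncate i (T ω)))) := by
        rw [cMI_eq_sum_cMI_truncate X, cMI_eq_sum_cMI_truncate Y, sum_add_distrib]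
    _ ≤ ∑ _i : Fin C, 1 := sum_le_sum fun i _ => hround i
    _ = C := by simp
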